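/- arXiv:2207.06986 — 2 statements merged into one kernel-verified Lean document; each statement's English description precedes it below -/
import Mathlib

section
/- Let H be a real normed vector space, λ ≥ 0 and a > 2. The SCAD functional thresholding rule satisfies conditions (ii) and (iii): for every Z ∈ H, if ‖Z‖ ≤ λ then s^SC_λ(Z) = 0, and ‖s^SC_λ(Z) − Z‖ ≤ λ. -/
/-- SCAD functional thresholding rule: soft thresholding for `‖Z‖ ≤ 2λ`,
`(((a−1) − aλ/‖Z‖)/(a−2)) • Z` for `2λ < ‖Z‖ ≤ aλ`, and `Z` for `‖Z‖ > aλ`. -/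
noncomputable def scadThresh {H : Type*} [NormedAddCommGroup H] [NormedSpace ℝ H]
    (lam a : ℝ) (Z : H) : H :=
  if ‖Z‖ ≤ 2 * lam then (max (1 - lam / ‖Z‖) 0) • Z
  else if ‖Z‖ ≤ a * lam then (((a - 1) - a * lam / ‖Z‖) / (a - 2)) • Z
  else Z

/-! Every branch of the rule rescales `Z` by some `c`, and `‖c • Z - Z‖ = |c - 1| * ‖Z‖`, so
both conditions reduce to inequalities in the single variable `r = ‖Z‖`. On the soft
thresholding branch `|c - 1| * r = min λ r`; on the middle branch it is `(aλ - r)/(a - 2)`,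
which is at most `λ` exactly because `r > 2λ`. On that branch
`2λ < r ≤ aλ` already forces `a > 2`. -/

theorem abs_max_one_sub_div_sub_one_mul_le {lam r : ℝ} (hlam : 0 ≤ lam) (hr : 0 ≤ r) :
    |max (1 - lam / r) 0 - 1| * r ≤ lam := by
  rcases hr.eq_or_lt with rfl | hr
  · simpa using hlam
  rcases le_or_gt (1 - lam / r) 0 with hc | hc
  · have hrlam : r ≤ lam := by
      rwa [sub_nonpos, le_div_iff₀ hr, one_mul] at hc
    simpa [max_eq_right hc] using hrlam
  · rw [max_eq_left hc.le, sub_sub_cancel_left, abs_neg, abs_of_nonneg (by positivity),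
      div_mul_cancel₀ _ hr.ne']

theorem abs_scad_middle_sub_one_mul_le {lam a r : ℝ} (hlam : 0 ≤ lam) (h2r : 2 * lam < r)
    (hra : r ≤ a * lam) : |((a - 1) - a * lam / r) / (a - 2) - 1| * r ≤ lam := by
  have hr : 0 < r := by linarith
  have ha : 0 < a - 2 := by
    by_contra! ha
    nlinarith
  have hmove : (((a - 1) - a * lam / r) / (a - 2) - 1) * r = (r - a * lam) / (a - 2) := by
    field_simp
    ring
  rw [← abs_of_pos hr, ← abs_mul, abs_of_pos hr, hmove, abs_div, abs_of_pos ha,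
    abs_of_nonpos (by linarith), div_le_iff₀ ha]
  linarith

section

variable {H : Type*} [NormedAddCommGroup H] [NormedSpace ℝ H]

theorem norm_smul_sub_self (c : ℝ) (Z : H) : ‖c • Z - Z‖ = |c - 1| * ‖Z‖ := by
  rw [← Real.norm_eq_abs, ← norm_smul, sub_smul, one_smul]

theorem scadThresh_eq_zero_of_norm_le {lam a : ℝ} {Z : H} (hZ : ‖Z‖ ≤ lam) :
    scadThresh lam a Z = 0 := by
  have h2 : ‖Z‖ ≤ 2 * lam := by linarith [norm_nonneg Z]
  rw [scadThresh, if_pos h2]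
  rcases eq_or_ne Z 0 with rfl | hZ0
  · exact smul_zero _
  have hc : 1 - lam / ‖Z‖ ≤ 0 := by
    rwa [sub_nonpos, le_div_iff₀ (norm_pos_iff.mpr hZ0), one_mul]
  rw [max_eq_right hc, zero_smul]

theorem norm_scadThresh_sub_le {lam : ℝ} (a : ℝ) (hlam : 0 ≤ lam) (Z : H) :
    ‖scadThresh lam a Z - Z‖ ≤ lam := by
  unfold scadThresh
  split_ifs with hsoft hmiddle
  · rw [norm_smul_sub_self]
    exact abs_max_one_sub_div_sub_one_mul_le hlam (norm_nonneg Z)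
  · rw [norm_smul_sub_self]
    exact abs_scad_middle_sub_one_mul_le hlam (not_le.mp hsoft) hmiddle
  · simpa using hlam

end

theorem scadThresh_conditions_ii_iii_general {H : Type*} [NormedAddCommGroup H] [NormedSpace ℝ H]
    (lam a : ℝ) (hlam : 0 ≤ lam) :
    ∀ Z : H, (‖Z‖ ≤ lam → scadThresh lam a Z = 0) ∧ ‖scadThresh lam a Z - Z‖ ≤ lam :=
  fun Z => ⟨scadThresh_eq_zero_of_norm_le, norm_scadThresh_sub_le a hlam Z⟩

/-- The SCAD functional thresholding rule satisfies conditions (ii) and (iii). -/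
theorem scadThresh_conditions_ii_iii {H : Type*} [NormedAddCommGroup H] [NormedSpace ℝ H]
    (lam a : ℝ) (hlam : 0 ≤ lam) (ha : 2 < a) :
    ∀ Z : H, (‖Z‖ ≤ lam → scadThresh lam a Z = 0) ∧ ‖scadThresh lam a Z - Z‖ ≤ lam :=
  scadThresh_conditions_ii_iii_general lam a hlam
end

section
/- Let H be a real normed vector space, λ ≥ 0, η ≥ 0 and Z ∈ H with Z ≠ 0. The adaptive lasso functional thresholding rule minimizes the penalized quadratic loss with adaptive lasso penalty: for every θ ∈ H, (1/2)‖s^AL_λ(Z) − Z‖² + λ^{η+1}‖Z‖^{−η}‖s^AL_λ(Z)‖ ≤ (1/2)‖θ − Z‖² + λ^{η+1}‖Z‖^{−η}‖θ‖. -/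
/-!
Write `c = λ^{η+1}‖Z‖^{-η}`, so that `s^AL_λ(Z) = (1 - c/‖Z‖)₊ • Z` is the group soft
thresholding of `Z` at level `c`. By the reverse triangle inequality `|‖θ‖ - ‖Z‖| ≤ ‖θ - Z‖`,
the penalized loss of `θ` is bounded below by the one-dimensional loss
`t ↦ (1/2)(t - ‖Z‖)² + c t` at `t = ‖θ‖`, and the thresholded vector, being a multiple of `Z`,
attains that one-dimensional loss at its minimizer `t = (‖Z‖ - c)₊` on `[0, ∞)`.
-/

/-- Adaptive lasso functional thresholding rule:
`s^AL_λ(Z) = (1 − λ^{η+1}/‖Z‖^{η+1})₊ • Z` (and `0` at `Z = 0`), with real powers. -/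
noncomputable def alThresh {H : Type*} [NormedAddCommGroup H] [NormedSpace ℝ H]
    (lam eta : ℝ) (Z : H) : H :=
  (max (1 - lam ^ (eta + 1) / ‖Z‖ ^ (eta + 1)) 0) • Z

open Set

theorem isMinOn_half_sq_sub_add_mul_max_sub (r c : ℝ) :
    IsMinOn (fun t : ℝ => 1 / 2 * (t - r) ^ 2 + c * t) (Ici 0) (max (r - c) 0) := by
  refine isMinOn_iff.mpr fun t (ht : 0 ≤ t) => ?_
  rcases le_total c r with hcr | hrc
  · rw [max_eq_left (sub_nonneg.mpr hcr)]
    nlinarith [sq_nonneg (t - r + c)]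
  · rw [max_eq_right (sub_nonpos.mpr hrc)]
    nlinarith [mul_nonneg ht (sub_nonneg.mpr hrc)]

section SoftThreshold

variable {E : Type*} [NormedAddCommGroup E] [NormedSpace ℝ E]

noncomputable def softThresh (c : ℝ) (Z : E) : E :=
  max (1 - c / ‖Z‖) 0 • Z

theorem norm_softThresh {Z : E} (hZ : Z ≠ 0) (c : ℝ) :
    ‖softThresh c Z‖ = max (‖Z‖ - c) 0 := by
  have hr : 0 < ‖Z‖ := norm_pos_iff.mpr hZ
  rw [softThresh, norm_smul, Real.norm_of_nonneg (le_max_right _ _),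
    max_mul_of_nonneg _ _ hr.le, sub_mul, div_mul_cancel₀ _ hr.ne', one_mul, zero_mul]

theorem norm_softThresh_sub_sq (c : ℝ) (Z : E) :
    ‖softThresh c Z - Z‖ ^ 2 = (‖softThresh c Z‖ - ‖Z‖) ^ 2 := by
  set k := max (1 - c / ‖Z‖) 0
  have hk : softThresh c Z - Z = (k - 1) • Z := by rw [softThresh, sub_smul, one_smul]
  rw [hk, softThresh, norm_smul, norm_smul, Real.norm_eq_abs, Real.norm_eq_abs, mul_pow, sq_abs,
    abs_of_nonneg (le_max_right _ _), ← sub_one_mul, mul_pow]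

theorem isMinOn_softThresh {Z : E} (hZ : Z ≠ 0) (c : ℝ) :
    IsMinOn (fun θ : E => 1 / 2 * ‖θ - Z‖ ^ 2 + c * ‖θ‖) univ (softThresh c Z) := by
  refine isMinOn_univ_iff.mpr fun θ => ?_
  have hθ : (‖θ‖ - ‖Z‖) ^ 2 ≤ ‖θ - Z‖ ^ 2 := by
    rw [← sq_abs]
    exact pow_le_pow_left₀ (abs_nonneg _) (abs_norm_sub_norm_le θ Z) 2
  calc 1 / 2 * ‖softThresh c Z - Z‖ ^ 2 + c * ‖softThresh c Z‖
      = 1 / 2 * (max (‖Z‖ - c) 0 - ‖Z‖) ^ 2 + c * max (‖Z‖ - c) 0 := by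
        rw [norm_softThresh_sub_sq, norm_softThresh hZ]
    _ ≤ 1 / 2 * (‖θ‖ - ‖Z‖) ^ 2 + c * ‖θ‖ :=
        isMinOn_iff.mp (isMinOn_half_sq_sub_add_mul_max_sub ‖Z‖ c) ‖θ‖ (norm_nonneg θ)
    _ ≤ 1 / 2 * ‖θ - Z‖ ^ 2 + c * ‖θ‖ := by gcongr

theorem alThresh_eq_softThresh (lam eta : ℝ) {Z : E} (hZ : Z ≠ 0) :
    alThresh lam eta Z = softThresh (lam ^ (eta + 1) * ‖Z‖ ^ (-eta)) Z := by
  have hr : 0 < ‖Z‖ := norm_pos_iff.mpr hZ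
  rw [alThresh, softThresh, Real.rpow_add hr, Real.rpow_one, Real.rpow_neg hr.le]
  field_simp

end SoftThreshold

theorem alThresh_min_penalized_loss_general {H : Type*} [NormedAddCommGroup H] [NormedSpace ℝ H]
    (lam eta : ℝ) (Z : H) (hZ : Z ≠ 0) :
    ∀ θ : H,
      (1 / 2) * ‖alThresh lam eta Z - Z‖ ^ 2 +
          lam ^ (eta + 1) * ‖Z‖ ^ (-eta) * ‖alThresh lam eta Z‖ ≤
        (1 / 2) * ‖θ - Z‖ ^ 2 + lam ^ (eta + 1) * ‖Z‖ ^ (-eta) * ‖θ‖ := by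
  rw [alThresh_eq_softThresh lam eta hZ]
  exact isMinOn_univ_iff.mp (isMinOn_softThresh hZ _)

/-- The adaptive lasso functional thresholding rule minimizes the penalized quadratic loss
with adaptive lasso penalty `λ^{η+1}‖Z‖^{−η}‖θ‖`. -/
theorem alThresh_min_penalized_loss {H : Type*} [NormedAddCommGroup H] [NormedSpace ℝ H]
    (lam eta : ℝ) (hlam : 0 ≤ lam) (heta : 0 ≤ eta) (Z : H) (hZ : Z ≠ 0) :
    ∀ θ : H,
      (1 / 2) * ‖alThresh lam eta Z - Z‖ ^ 2 +
          lam ^ (eta + 1) * ‖Z‖ ^ (-eta) * ‖alThresh lam eta Z‖ ≤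
        (1 / 2) * ‖θ - Z‖ ^ 2 + lam ^ (eta + 1) * ‖Z‖ ^ (-eta) * ‖θ‖ :=
  alThresh_min_penalized_loss_general lam eta Z hZ
end
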